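/- arXiv:2103.15702 — 2 statements merged into one kernel-verified Lean document; each statement's English description precedes it below -/
import Mathlib

section
/- Let xs : ℕ → ℝ be a sequence of real numbers, each of which has a signed digit representation, let M : ℕ → ℕ be monotone, and suppose xs converges to a real number x with modulus M, i.e., for all p and all n ≥ M p one has |x - xs n| ≤ 2^{-p}. Then x has a signed digit representation. -/
/-!
A real number has a signed digit representation exactly when it lies in `[-1, 1]`: every such
series is bounded by `∑ 1 / 2 ^ (i + 1) = 1`, and conversely greedy digits `±1`, chosen by the
sign of the current remainder, keep the doubled remainder in `[-1, 1]`. Hence the property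
passes to limits because `[-1, 1]` is closed.
-/

/-- A real number has a signed digit representation if it is the sum of a
series of digits in {-1, 0, 1} weighted by powers of 1/2. -/
def HasSDR (x : ℝ) : Prop :=
  ∃ d : ℕ → ℤ, (∀ i, d i = -1 ∨ d i = 0 ∨ d i = 1) ∧
    x = ∑' i : ℕ, (d i : ℝ) / 2 ^ (i + 1)

open Filter Topology Finset

section DigitSeries

variable {d : ℕ → ℝ}

lemma hasSum_one_div_two_pow_succ : HasSum (fun i : ℕ => (1 : ℝ) / 2 ^ (i + 1)) 1 := by
  convert hasSum_geometric_two' (1 : ℝ) using 2 with i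
  rw [pow_succ]
  ring

lemma norm_div_two_pow_succ_le (hd : ∀ i, |d i| ≤ 1) (i : ℕ) :
    ‖d i / 2 ^ (i + 1)‖ ≤ 1 / 2 ^ (i + 1) := by
  rw [Real.norm_eq_abs, abs_div, abs_pow, abs_two]
  gcongr
  exact hd i

lemma summable_div_two_pow_succ (hd : ∀ i, |d i| ≤ 1) :
    Summable (fun i : ℕ => d i / 2 ^ (i + 1)) :=
  .of_norm_bounded hasSum_one_div_two_pow_succ.summable (norm_div_two_pow_succ_le hd)

lemma abs_tsum_div_two_pow_succ_le_one (hd : ∀ i, |d i| ≤ 1) :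
    |∑' i : ℕ, d i / 2 ^ (i + 1)| ≤ 1 :=
  tsum_of_norm_bounded hasSum_one_div_two_pow_succ (norm_div_two_pow_succ_le hd)

end DigitSeries

lemma abs_intCast_le_one_of_signed_digit {k : ℤ} (hk : k = -1 ∨ k = 0 ∨ k = 1) :
    |(k : ℝ)| ≤ 1 := by
  rcases hk with rfl | rfl | rfl <;> norm_num

lemma HasSDR.abs_le_one {x : ℝ} (h : HasSDR x) : |x| ≤ 1 := by
  obtain ⟨d, hd, rfl⟩ := h
  exact abs_tsum_div_two_pow_succ_le_one fun i => abs_intCast_le_one_of_signed_digit (hd i)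

section Greedy

noncomputable def greedyDigit (r : ℝ) : ℤ := if 0 ≤ r then 1 else -1

/-- The error of the first `n` greedy digits, rescaled by `2 ^ n` (`eq_sum_add_greedyRemainder`). -/
noncomputable def greedyRemainder (x : ℝ) : ℕ → ℝ
  | 0 => x
  | n + 1 => 2 * greedyRemainder x n - greedyDigit (greedyRemainder x n)

lemma greedyDigit_signed (r : ℝ) :
    greedyDigit r = -1 ∨ greedyDigit r = 0 ∨ greedyDigit r = 1 := by
  unfold greedyDigit
  split_ifs <;> simp

lemma abs_two_mul_sub_greedyDigit_le {r : ℝ} (hr : |r| ≤ 1) : |2 * r - greedyDigit r| ≤ 1 := by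
  rw [abs_le] at hr ⊢
  unfold greedyDigit
  split_ifs <;> push_cast <;> constructor <;> linarith

lemma abs_greedyRemainder_le {x : ℝ} (hx : |x| ≤ 1) (n : ℕ) : |greedyRemainder x n| ≤ 1 := by
  induction n with
  | zero => exact hx
  | succ n ih => exact abs_two_mul_sub_greedyDigit_le ih

lemma eq_sum_add_greedyRemainder (x : ℝ) (n : ℕ) :
    x = ∑ i ∈ range n, (greedyDigit (greedyRemainder x i) : ℝ) / 2 ^ (i + 1)
      + greedyRemainder x n / 2 ^ n := by
  induction n with
  | zero => simp [greedyRemainder]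
  | succ n ih =>
    have hsplit : (greedyDigit (greedyRemainder x n) : ℝ) / 2 ^ (n + 1)
        + (2 * greedyRemainder x n - greedyDigit (greedyRemainder x n)) / 2 ^ (n + 1)
        = greedyRemainder x n / 2 ^ n := by
      rw [pow_succ]
      field_simp
      ring
    rw [sum_range_succ, greedyRemainder]
    linarith

lemma hasSDR_of_abs_le_one {x : ℝ} (hx : |x| ≤ 1) : HasSDR x := by
  set d : ℕ → ℤ := fun i => greedyDigit (greedyRemainder x i)
  have hd : ∀ i, |(d i : ℝ)| ≤ 1 := fun i =>
    abs_intCast_le_one_of_signed_digit (greedyDigit_signed _)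
  refine ⟨d, fun i => greedyDigit_signed _, (HasSum.tsum_eq ?_).symm⟩
  rw [hasSum_iff_tendsto_nat_of_summable_norm (summable_div_two_pow_succ hd).norm]
  have hrem : Tendsto (fun n => greedyRemainder x n / 2 ^ n) atTop (𝓝 0) := by
    refine squeeze_zero_norm (fun n => ?_) (tendsto_pow_atTop_nhds_zero_of_lt_one
      (by norm_num : (0 : ℝ) ≤ 1 / 2) (by norm_num))
    rw [Real.norm_eq_abs, abs_div, abs_pow, abs_two, div_pow, one_pow]
    gcongr
    exact abs_greedyRemainder_le hx n
  have := (tendsto_const_nhds (x := x)).sub hrem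
  rw [sub_zero] at this
  refine this.congr fun n => ?_
  rw [sub_eq_iff_eq_add, ← eq_sum_add_greedyRemainder]

end Greedy

theorem hasSDR_iff_abs_le_one {x : ℝ} : HasSDR x ↔ |x| ≤ 1 :=
  ⟨HasSDR.abs_le_one, hasSDR_of_abs_le_one⟩

theorem sdr_lim_general (xs : ℕ → ℝ) (x : ℝ) (M : ℕ → ℕ)
    (hsdr : ∀ n : ℕ, HasSDR (xs n))
    (hconv : ∀ p : ℕ, ∀ n : ℕ, M p ≤ n → |x - xs n| ≤ 1 / 2 ^ p) :
    HasSDR x := by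
  rw [hasSDR_iff_abs_le_one]
  have hbound (p : ℕ) : |x| ≤ 1 + (1 / 2) ^ p := by
    have := abs_sub_abs_le_abs_sub x (xs (M p))
    have := (hsdr (M p)).abs_le_one
    have := hconv p (M p) le_rfl
    rw [one_div_pow]
    linarith
  have hlim : Tendsto (fun p : ℕ => 1 + (1 / 2 : ℝ) ^ p) atTop (𝓝 1) := by
    simpa using tendsto_const_nhds.add
      (tendsto_pow_atTop_nhds_zero_of_lt_one (by norm_num : (0 : ℝ) ≤ 1 / 2) (by norm_num))
  exact ge_of_tendsto' hlim hbound

theorem sdr_lim (xs : ℕ → ℝ) (x : ℝ) (M : ℕ → ℕ)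
    (hsdr : ∀ n : ℕ, HasSDR (xs n)) (hM : Monotone M)
    (hconv : ∀ p : ℕ, ∀ n : ℕ, M p ≤ n → |x - xs n| ≤ 1 / 2 ^ p) :
    HasSDR x :=
  sdr_lim_general xs x M hsdr hconv
end

section
/- Let x be a real number that has a signed digit representation and suppose 0 ≤ x. Then x - 1 has a signed digit representation. -/
lemma sdr_fun_eq : (fun i : ℕ => (1 : ℝ) / 2 ^ (i + 1)) = fun i : ℕ => 1 / 2 / 2 ^ i :=
  funext fun i => by rw [pow_succ]; ring

lemma sdr_geom_tsum : ∑' i : ℕ, (1 : ℝ) / 2 ^ (i + 1) = 1 := by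
  rw [sdr_fun_eq]; exact tsum_geometric_two' 1

lemma sdr_geom_summable : Summable (fun i : ℕ => (1 : ℝ) / 2 ^ (i + 1)) := by
  rw [sdr_fun_eq]; exact summable_geometric_two' 1

lemma hasSDR_of_Icc (y : ℝ) (h0 : 0 ≤ y) (h1 : y ≤ 1) : HasSDR y := by
  rcases eq_or_lt_of_le h1 with h1 | h1
  · refine ⟨fun _ => 1, fun i => by simp, ?_⟩
    simp only [Int.cast_one]
    rw [sdr_geom_tsum, h1]
  · -- binary expansion
    set d : ℕ → ℤ := fun i => ⌊y * 2 ^ (i + 1)⌋ - 2 * ⌊y * 2 ^ i⌋ with hd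
    have hd01 : ∀ i, d i = 0 ∨ d i = 1 := by
      intro i
      have hle : 2 * ⌊y * 2 ^ i⌋ ≤ ⌊y * 2 ^ (i + 1)⌋ := by
        rw [Int.le_floor]
        push_cast
        have := Int.floor_le (y * 2 ^ i)
        rw [pow_succ]
        nlinarith
      have hlt : ⌊y * 2 ^ (i + 1)⌋ < 2 * ⌊y * 2 ^ i⌋ + 2 := by
        rw [Int.floor_lt]
        push_cast
        have := Int.lt_floor_add_one (y * 2 ^ i)
        rw [pow_succ]
        nlinarith
      simp only [hd]
      omega
    have hfloor0 : ⌊y⌋ = 0 := Int.floor_eq_zero_iff.2 ⟨h0, h1⟩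
    have hpartial : ∀ n, ∑ i ∈ Finset.range n, (d i : ℝ) / 2 ^ (i + 1)
        = (⌊y * 2 ^ n⌋ : ℝ) / 2 ^ n := by
      intro n
      have : ∀ i, (d i : ℝ) / 2 ^ (i + 1)
          = (⌊y * 2 ^ (i + 1)⌋ : ℝ) / 2 ^ (i + 1) - (⌊y * 2 ^ i⌋ : ℝ) / 2 ^ i := by
        intro i
        simp only [hd]
        push_cast
        field_simp
        ring
      rw [Finset.sum_congr rfl fun i _ => this i, Finset.sum_range_sub
        (fun i => (⌊y * 2 ^ i⌋ : ℝ) / 2 ^ i)]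
      simp [hfloor0]
    have htend : Filter.Tendsto (fun n => ∑ i ∈ Finset.range n, (d i : ℝ) / 2 ^ (i + 1))
        Filter.atTop (nhds y) := by
      simp only [hpartial]
      have hlow : Filter.Tendsto (fun n : ℕ => y - (1 / 2 : ℝ) ^ n) Filter.atTop (nhds y) := by
        have := tendsto_pow_atTop_nhds_zero_of_lt_one (by norm_num : (0:ℝ) ≤ 1/2)
          (by norm_num : (1/2:ℝ) < 1)
        simpa using (tendsto_const_nhds (x := y)).sub this
      refine tendsto_of_tendsto_of_tendsto_of_le_of_le hlow tendsto_const_nhds ?_ ?_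
      · intro n
        simp only
        have h2 : (0:ℝ) < 2 ^ n := by positivity
        have hfl : y * 2 ^ n - 1 < (⌊y * 2 ^ n⌋ : ℝ) := by
          have := Int.lt_floor_add_one (y * 2 ^ n); linarith
        rw [le_div_iff₀ h2]
        have h12 : ((1:ℝ)/2) ^ n * 2 ^ n = 1 := by rw [← mul_pow]; norm_num
        nlinarith
      · intro n
        simp only
        have h2 : (0:ℝ) < 2 ^ n := by positivity
        rw [div_le_iff₀ h2]
        exact Int.floor_le (y * 2 ^ n)
    have hnn : ∀ i, 0 ≤ (d i : ℝ) / 2 ^ (i + 1) := by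
      intro i
      rcases hd01 i with h | h <;> rw [h] <;> positivity
    have hsum : HasSum (fun i => (d i : ℝ) / 2 ^ (i + 1)) y :=
      (hasSum_iff_tendsto_nat_of_nonneg hnn y).2 htend
    refine ⟨d, fun i => ?_, hsum.tsum_eq.symm⟩
    rcases hd01 i with h | h
    · exact Or.inr (Or.inl h)
    · exact Or.inr (Or.inr h)

theorem sdr_pos_minus_one (x : ℝ) (hx : HasSDR x) (hpos : 0 ≤ x) :
    HasSDR (x - 1) := by
  obtain ⟨d, hd, hx⟩ := hx
  have hle : ∀ i, (d i : ℝ) / 2 ^ (i + 1) ≤ (1 : ℝ) / 2 ^ (i + 1) := by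
    intro i
    have h1 : (d i : ℝ) ≤ 1 := by rcases hd i with h | h | h <;> rw [h] <;> norm_num
    have h2 : (0:ℝ) < 2 ^ (i + 1) := by positivity
    exact div_le_div_of_nonneg_right h1 h2.le
  have hsg : Summable (fun i : ℕ => (1 : ℝ) / 2 ^ (i + 1)) := sdr_geom_summable
  have hsf : Summable (fun i : ℕ => (d i : ℝ) / 2 ^ (i + 1)) := by
    apply Summable.of_abs
    apply Summable.of_nonneg_of_le (fun i => abs_nonneg _) _ hsg
    intro i
    rw [abs_div, abs_pow]
    rcases hd i with h | h | h <;> rw [h] <;> norm_num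
  have hx1 : x ≤ 1 := by
    rw [hx]
    calc ∑' i : ℕ, (d i : ℝ) / 2 ^ (i + 1) ≤ ∑' i : ℕ, (1 : ℝ) / 2 ^ (i + 1) :=
          Summable.tsum_le_tsum hle hsf hsg
      _ = 1 := sdr_geom_tsum
  obtain ⟨e, he, hey⟩ := hasSDR_of_Icc (1 - x) (by linarith) (by linarith)
  refine ⟨fun i => -(e i), fun i => by rcases he i with h | h | h <;> simp [h], ?_⟩
  have : ∑' i : ℕ, ((-(e i) : ℤ) : ℝ) / 2 ^ (i + 1)
      = -∑' i : ℕ, (e i : ℝ) / 2 ^ (i + 1) := by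
    rw [← tsum_neg]
    congr 1
    funext i
    push_cast
    ring
  rw [this, ← hey]
  ring
end
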